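/- With respect to the encoding S₁, for every m ≥ 1 the string 0^{p_m} satisfies C_{S₁}(0^{p_m}) = |bin(m)| + 1, and the unique minimal description of 0^{p_m} is (T_m, 0), which uses the m-state transducer T_m; consequently 0^{p_m} ∈ L^{S₁}_{=m}. -/

import Mathlib

/-! ## Transducers

A deterministic sequential transducer over the binary alphabet `Bool`
(`false` = 0, `true` = 1), with state set `{0, …, n-1}` (representing the
states `1, …, n` of the paper) and start state `0` (the paper's state `1`). -/

structure Transducer where
  n : ℕ
  npos : 0 < n
  delta : Fin n → Bool → Fin n × List Bool

namespace Transducer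

/-- The start state. -/
def start (T : Transducer) : Fin T.n := ⟨0, T.npos⟩

/-- The (state) size of a transducer: its number of states. -/
def size (T : Transducer) : ℕ := T.n

/-- Running `T` from state `q` on an input string: resulting state and output. -/
def run (T : Transducer) (q : Fin T.n) : List Bool → Fin T.n × List Bool
  | [] => (q, [])
  | a :: x =>
    let s := T.delta q a
    let r := T.run s.1 x
    (r.1, s.2 ++ r.2)

/-- The function `{0,1}* → {0,1}*` computed by the transducer `T`. -/
def output (T : Transducer) (p : List Bool) : List Bool :=
  (T.run T.start p).2

end Transducer

/-- The one-state identity transducer. -/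
def idTransducer : Transducer :=
  ⟨1, Nat.one_pos, fun q b => (q, [b])⟩

/-! ## The standard encoding `S₀` -/

/-- `bin i`: the binary representation of `i ≥ 1`, most significant bit first. -/
def binRep (i : ℕ) : List Bool := (Nat.bits i).reverse

/-- `v† = v₁0v₂0⋯v_{m-1}0v_m1`. -/
def dagger : List Bool → List Bool
  | [] => []
  | [a] => [a, true]
  | a :: b :: v => a :: false :: dagger (b :: v)

/-- `v◇`: the bitwise complement of `(1v)†`. -/
def diamond (v : List Bool) : List Bool := (dagger (true :: v)).map (!·)

/-- The encoding `bin(i_t)‡ ⬝ v_t◇` of a single transition from state `j`,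
where `bin(i_t)‡ = ε` for a self-loop and `bin(i_t)† ` otherwise. -/
def encTransition {n : ℕ} (j : Fin n) (t : Fin n × List Bool) : List Bool :=
  (if t.1 = j then [] else dagger (binRep (t.1.val + 1))) ++ diamond t.2

/-- The standard encoding of a transducer: the concatenation, over the states
`j = 1, …, n` in order, of the encodings of the transitions on input `0` and
input `1` from `j`. -/
def stdEnc (T : Transducer) : List Bool :=
  (List.finRange T.n).flatMap fun j =>
    encTransition j (T.delta j false) ++ encTransition j (T.delta j true)

/-- `D_{S₀}`, the set of standard encodings of transducers. -/
def DS0 : Set (List Bool) := Set.range stdEnc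

/-- The set of sizes `|σ| + |p|` of descriptions `(T_σ, p)` of `x` with respect
to the standard encoding. -/
def stdSizes (x : List Bool) : Set ℕ :=
  {c | ∃ (T : Transducer) (p : List Bool),
    T.output p = x ∧ c = (stdEnc T).length + p.length}

/-- `C x`: the finite-state complexity of `x` w.r.t. the standard encoding. -/
noncomputable def Cstd (x : List Bool) : ℕ := sInf (stdSizes x)

/-- `L_{≤ m}` w.r.t. the standard encoding: strings having a minimal
description by a transducer with at most `m` states. -/
def stdLle (m : ℕ) : Set (List Bool) :=
  {x | ∃ (T : Transducer) (p : List Bool),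
    T.output p = x ∧ (stdEnc T).length + p.length = Cstd x ∧ T.size ≤ m}

/-! ## Computable encodings -/

/-- A computable encoding `S = (D_S, f_S)` of all transducers: a decidable
(computable) set `D_S ⊆ {0,1}*` together with a computable bijection
`f_S : D_S → 𝒯_DGSM`, presented via a decoding function
`decode : {0,1}* → Option Transducer` defined exactly on `D_S`; its
computability is expressed via the (injective) standard encoding `stdEnc`. -/
structure CompEncoding where
  D : Set (List Bool)
  dec : ComputablePred (· ∈ D)
  decode : List Bool → Option Transducer
  decode_dom : ∀ σ, (decode σ).isSome ↔ σ ∈ D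
  decode_inj : ∀ σ₁ ∈ D, ∀ σ₂ ∈ D, decode σ₁ = decode σ₂ → σ₁ = σ₂
  decode_surj : ∀ T : Transducer, ∃ σ, decode σ = some T
  decode_comp : Computable fun σ => (decode σ).map stdEnc

namespace CompEncoding

/-- The set of sizes `|σ| + |p|` of descriptions `(T^S_σ, p)` of `x`. -/
def sizes (S : CompEncoding) (x : List Bool) : Set ℕ :=
  {c | ∃ (σ : List Bool) (T : Transducer) (p : List Bool),
    S.decode σ = some T ∧ T.output p = x ∧ c = σ.length + p.length}

/-- `C_S x`: the finite-state complexity of `x` w.r.t. the encoding `S`. -/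
noncomputable def C (S : CompEncoding) (x : List Bool) : ℕ := sInf (S.sizes x)

/-- `L^S_{≤ m}`: strings having a minimal description by a transducer with at
most `m` states (this is empty for `m = 0` since every transducer has at
least one state). -/
def Lle (S : CompEncoding) (m : ℕ) : Set (List Bool) :=
  {x | ∃ (σ : List Bool) (T : Transducer) (p : List Bool),
    S.decode σ = some T ∧ T.output p = x ∧
    σ.length + p.length = S.C x ∧ T.size ≤ m}

/-- `L^S_{= m} = L^S_{≤ m} \ L^S_{≤ m-1}`. -/
def Leq (S : CompEncoding) (m : ℕ) : Set (List Bool) := S.Lle m \ S.Lle (m - 1)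

/-- `L^S_{∃min m}`: strings having a minimal description by a transducer with
exactly `m` states. -/
def LexistsMin (S : CompEncoding) (m : ℕ) : Set (List Bool) :=
  {x | ∃ (σ : List Bool) (T : Transducer) (p : List Bool),
    S.decode σ = some T ∧ T.output p = x ∧
    σ.length + p.length = S.C x ∧ T.size = m}

end CompEncoding

/-! ## The strings `u_i` and `x_n(m)` from the proof of Theorem 1 -/

/-- `u_i = 1 0^i 1^{2n+2-i}` (for `1 ≤ i ≤ 2n+1`, a string of length `2n+3`). -/
def u (n i : ℕ) : List Bool :=
  true :: (List.replicate i false ++ List.replicate (2 * n + 2 - i) true)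

/-- `x_n(m) = u_1^{m²} u_2^{m²} ⋯ u_{2n+1}^{m²}`. -/
def xnm (n m : ℕ) : List Bool :=
  (List.range (2 * n + 1)).flatMap fun i => (List.replicate (m ^ 2) (u n (i + 1))).flatten

/-! ## The transducer `T₁` and input `p₁` from the proof of Theorem 1 -/

/-- The `2n`-state transducer `T₁` with `Δ(j,0) = (j, u_j^m)` for `1 ≤ j ≤ 2n`,
`Δ(j,1) = (j+1, ε)` for `1 ≤ j ≤ 2n-1`, and `Δ(2n,1) = (2n, u_{2n+1}^m)`. -/
def T1 (n m : ℕ) (hn : 0 < n) : Transducer where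
  n := 2 * n
  npos := by omega
  delta := fun j b =>
    match b with
    | false => (j, (List.replicate m (u n (j.val + 1))).flatten)
    | true =>
      if h : j.val + 1 < 2 * n then (⟨j.val + 1, h⟩, [])
      else (j, (List.replicate m (u n (2 * n + 1))).flatten)

/-- `p₁ = (0^m 1)^{2n-1} 0^m 1^m`. -/
def p1 (n m : ℕ) : List Bool :=
  (List.replicate (2 * n - 1) (List.replicate m false ++ [true])).flatten
    ++ List.replicate m false ++ List.replicate m true

/-! ## The transducers `T_n` from Section 5 -/

/-- `p_i`: the `i`-th prime (`p₁ = 2`, `p₂ = 3`, …). -/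
noncomputable def nthPrime (i : ℕ) : ℕ := Nat.nth Nat.Prime (i - 1)

/-- The `n`-state transducer `T_n` with `Δ_n(1,0) = (1, 0^{p_n})`,
`Δ_n(i,0) = (i, ε)` for `2 ≤ i ≤ n`, `Δ_n(j,1) = (j+1, ε)` for
`1 ≤ j ≤ n-1`, and `Δ_n(n,1) = (n, ε)`. -/
noncomputable def Tsec5 (n : ℕ) (hn : 0 < n) : Transducer where
  n := n
  npos := hn
  delta := fun j b =>
    match b with
    | false =>
      if j.val = 0 then (j, List.replicate (nthPrime n) false) else (j, [])
    | true =>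
      if h : j.val + 1 < n then (⟨j.val + 1, h⟩, []) else (j, [])

/-- The defining properties of the encoding `S₁` of Theorem 4: each `T_n` is
encoded by `bin(n)`, and every transducer that is not one of the `T_n` is
encoded by `0` concatenated with its standard encoding. -/
def IsS1 (S : CompEncoding) : Prop :=
  (∀ (n : ℕ) (hn : 0 < n), S.decode (binRep n) = some (Tsec5 n hn)) ∧
  (∀ T : Transducer, (∀ (n : ℕ) (hn : 0 < n), T ≠ Tsec5 n hn) →
    S.decode (false :: stdEnc T) = some T)

/-- The defining properties of the encoding `S₁'` of Corollary 2: each `T_n` is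
encoded by `bin(n)† ⬝ 1^n`, and every transducer `T` that is not one of the
`T_n`, with standard encoding `σ`, is encoded by `0 ⬝ σ† ⬝ 1^{2^{|σ|}}`. -/
def IsS1' (S : CompEncoding) : Prop :=
  (∀ (n : ℕ) (hn : 0 < n),
    S.decode (dagger (binRep n) ++ List.replicate n true) = some (Tsec5 n hn)) ∧
  (∀ T : Transducer, (∀ (n : ℕ) (hn : 0 < n), T ≠ Tsec5 n hn) →
    S.decode (false :: (dagger (stdEnc T) ++
      List.replicate (2 ^ (stdEnc T).length) true)) = some T)

/-! The description `(T_m, 0)` has length `|bin m| + 1`. A description `(T_n, p)` outputs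
`0^{k p_n}` with `k` at most the number of `0`s in `p`, so it yields the prime length `p_m`
only if `n = m` and `p` contains a `0`. Any other transducer costs `1 + |σ₀|` for its
standard encoding `σ₀`, and its output on `p` is shorter than `2 ^ (|σ₀| + |p| - 1)`;
since `p_m ≥ m`, this forces `|σ₀| + |p| > |bin m|`. -/

theorem dagger_length : ∀ v : List Bool, (dagger v).length = 2 * v.length
  | [] => rfl
  | [_] => rfl
  | _ :: b :: v => by
    simp only [dagger, List.length_cons, dagger_length (b :: v)]
    omega

theorem diamond_length (v : List Bool) : (diamond v).length = 2 * v.length + 2 := by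
  simp only [diamond, List.length_map, dagger_length, List.length_cons]
  omega

namespace Transducer

theorem run_cons (T : Transducer) (q : Fin T.n) (a : Bool) (x : List Bool) :
    T.run q (a :: x) =
      ((T.run (T.delta q a).1 x).1, (T.delta q a).2 ++ (T.run (T.delta q a).1 x).2) :=
  rfl

/-- Each transition contributes its output `v` through `v◇`, of length `2|v| + 2`. -/
theorem two_mul_length_delta_add_two_le (T : Transducer) (q : Fin T.n) (b : Bool) :
    2 * (T.delta q b).2.length + 2 ≤ (stdEnc T).length := by
  calc 2 * (T.delta q b).2.length + 2
      ≤ (encTransition q (T.delta q false) ++ encTransition q (T.delta q true)).length := by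
        cases b <;> simp only [List.length_append, encTransition, diamond_length] <;> omega
    _ ≤ (stdEnc T).length := by
        rw [stdEnc, List.length_flatMap]
        exact List.single_le_sum (fun _ _ => Nat.zero_le _) _
          (List.mem_map_of_mem (List.mem_finRange q))

theorem two_mul_length_run_add_le (T : Transducer) : ∀ (p : List Bool) (q : Fin T.n),
    2 * (T.run q p).2.length + 2 * p.length ≤ p.length * (stdEnc T).length
  | [], _ => by simp [run]
  | a :: x, q => by
    have hstep := T.two_mul_length_delta_add_two_le q a
    have hrest := T.two_mul_length_run_add_le x (T.delta q a).1
    simp only [run_cons, List.length_append, List.length_cons]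
    nlinarith

/-- `|T.output p| ≤ |p| · |stdEnc T| / 2`, and `|p| · |stdEnc T| < 2 ^ (|p| + |stdEnc T|)`. -/
theorem size_length_output_lt (T : Transducer) (p : List Bool) :
    Nat.size (T.output p).length < (stdEnc T).length + p.length := by
  have hB : 2 ≤ (stdEnc T).length := by
    have := T.two_mul_length_delta_add_two_le T.start false
    omega
  rcases p with _ | ⟨a, x⟩
  · simp only [output, run, List.length_nil, Nat.size_zero, add_zero]
    omega
  set p := a :: x
  have hL : 1 ≤ p.length := by simp [p]
  have hrun := T.two_mul_length_run_add_le p T.start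
  set L := p.length
  set B := (stdEnc T).length
  have hprod : L * B < 2 ^ (B + L) := by
    rw [pow_add, mul_comm L]
    exact Nat.mul_lt_mul'' B.lt_two_pow_self L.lt_two_pow_self
  have hpow : 2 ^ (B + L) = 2 * 2 ^ (B + L - 1) := by
    rw [← pow_succ', Nat.sub_add_cancel (by omega)]
  suffices Nat.size (T.output p).length ≤ B + L - 1 by omega
  rw [Nat.size_le]
  unfold output
  omega

end Transducer

theorem CompEncoding.eq_of_decode_eq_some {S : CompEncoding} {σ₁ σ₂ : List Bool}
    {T : Transducer} (h₁ : S.decode σ₁ = some T) (h₂ : S.decode σ₂ = some T) : σ₁ = σ₂ :=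
  S.decode_inj σ₁ ((S.decode_dom σ₁).mp (by simp [h₁])) σ₂
    ((S.decode_dom σ₂).mp (by simp [h₂])) (h₁.trans h₂.symm)

theorem IsS1.decode_eq_some {S : CompEncoding} (hS : IsS1 S) {σ : List Bool}
    {T : Transducer} (h : S.decode σ = some T) :
    (∃ (n : ℕ) (hn : 0 < n), T = Tsec5 n hn ∧ σ = binRep n) ∨
      ((∀ (n : ℕ) (hn : 0 < n), T ≠ Tsec5 n hn) ∧ σ = false :: stdEnc T) := by
  by_cases hT : ∃ (n : ℕ) (hn : 0 < n), T = Tsec5 n hn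
  · obtain ⟨n, hn, rfl⟩ := hT
    exact .inl ⟨n, hn, rfl, CompEncoding.eq_of_decode_eq_some h (hS.1 n hn)⟩
  · simp only [not_exists] at hT
    exact .inr ⟨hT, CompEncoding.eq_of_decode_eq_some h (hS.2 T hT)⟩

theorem le_nthPrime (m : ℕ) : m ≤ nthPrime m := by
  have := Nat.add_two_le_nth_prime (m - 1)
  unfold nthPrime
  omega

theorem eq_of_nthPrime_eq {m n : ℕ} (hm : 0 < m) (hn : 0 < n)
    (h : nthPrime m = nthPrime n) : m = n := by
  have : m - 1 = n - 1 := Nat.nth_injective Nat.infinite_setOfPred_prime h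
  omega

theorem Tsec5_run_snd (n : ℕ) (hn : 0 < n) : ∀ (p : List Bool) (q : Fin n),
    ∃ k ≤ p.count false, ((Tsec5 n hn).run q p).2 = List.replicate (k * nthPrime n) false
  | [], _ => ⟨0, le_rfl, by simp [Transducer.run]⟩
  | a :: x, q => by
    obtain ⟨k, hk, hrest⟩ := Tsec5_run_snd n hn x ((Tsec5 n hn).delta q a).1
    rw [Transducer.run_cons (Tsec5 n hn) q, hrest]
    cases a with
    | true =>
      refine ⟨k, by simpa using hk, ?_⟩
      simp only [Tsec5]
      split <;> rfl
    | false =>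
      by_cases hq : q.val = 0
      · refine ⟨k + 1, by simpa using hk, ?_⟩
        simp only [Tsec5, hq, ↓reduceIte, List.replicate_append_replicate]
        congr 1
        ring
      · exact ⟨k, by simp only [List.count_cons_self]; omega, by simp [Tsec5, hq]⟩

theorem eq_and_count_pos_of_Tsec5_output_eq (n m : ℕ) (hn : 0 < n) (hm : 0 < m) (p : List Bool)
    (hout : (Tsec5 n hn).output p = List.replicate (nthPrime m) false) :
    n = m ∧ 0 < p.count false := by
  obtain ⟨k, hk, hrun⟩ := Tsec5_run_snd n hn p (Tsec5 n hn).start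
  have hlen : k * nthPrime n = nthPrime m := by
    simpa using congrArg List.length (hrun.symm.trans hout)
  have hpm : (nthPrime m).Prime := Nat.prime_nth_prime _
  have hpn : nthPrime n = nthPrime m :=
    (hpm.eq_one_or_self_of_dvd _ (Dvd.intro_left k hlen)).resolve_left
      (Nat.prime_nth_prime _).ne_one
  have hk1 : k = 1 := by
    rw [hpn] at hlen
    exact (Nat.mul_eq_right hpm.ne_zero).mp hlen
  exact ⟨eq_of_nthPrime_eq hn hm hpn, by omega⟩

theorem IsS1.description_length_ge {S : CompEncoding} (hS : IsS1 S) (m : ℕ) (hm : 0 < m)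
    {σ : List Bool} {T : Transducer} {p : List Bool} (hdec : S.decode σ = some T)
    (hout : T.output p = List.replicate (nthPrime m) false) :
    (binRep m).length + 1 ≤ σ.length + p.length ∧
      (σ.length + p.length = (binRep m).length + 1 →
        T = Tsec5 m hm ∧ σ = binRep m ∧ p = [false]) := by
  rcases hS.decode_eq_some hdec with ⟨n, hn, rfl, rfl⟩ | ⟨-, rfl⟩
  · obtain ⟨rfl, hcount⟩ := eq_and_count_pos_of_Tsec5_output_eq n m hn hm p hout
    have hp : 1 ≤ p.length := hcount.trans_le List.count_le_length
    refine ⟨by omega, fun hsum => ⟨rfl, rfl, ?_⟩⟩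
    obtain ⟨b, rfl⟩ := List.length_eq_one_iff.mp (by omega : p.length = 1)
    cases b <;> simp_all
  · have hsize := T.size_length_output_lt p
    have hmono : Nat.size m ≤ Nat.size (T.output p).length := by
      rw [hout, List.length_replicate]
      exact Nat.size_le_size (le_nthPrime m)
    have hbin : (binRep m).length = Nat.size m := by
      simp [binRep, Nat.size_eq_bits_len]
    simp only [List.length_cons]
    omega

theorem stmt13 (S : CompEncoding) (hS : IsS1 S) (m : ℕ) (hm : 0 < m) :
    S.C (List.replicate (nthPrime m) false) = (binRep m).length + 1 ∧
    (∀ (σ : List Bool) (T : Transducer) (p : List Bool),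
      S.decode σ = some T → T.output p = List.replicate (nthPrime m) false →
      σ.length + p.length = S.C (List.replicate (nthPrime m) false) →
      T = Tsec5 m hm ∧ σ = binRep m ∧ p = [false]) ∧
    List.replicate (nthPrime m) false ∈ S.Leq m := by
  have hout : (Tsec5 m hm).output [false] = List.replicate (nthPrime m) false := by
    simp [Transducer.output, Transducer.run, Transducer.start, Tsec5]
  have hmem : (binRep m).length + 1 ∈ S.sizes (List.replicate (nthPrime m) false) :=
    ⟨binRep m, Tsec5 m hm, [false], hS.1 m hm, hout, rfl⟩
  have hC : S.C (List.replicate (nthPrime m) false) = (binRep m).length + 1 :=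
    le_antisymm (Nat.sInf_le hmem) (le_csInf ⟨_, hmem⟩ fun _ ⟨_, _, _, hdec, hout, hc⟩ =>
      hc ▸ (hS.description_length_ge m hm hdec hout).1)
  have hunique : ∀ (σ : List Bool) (T : Transducer) (p : List Bool),
      S.decode σ = some T → T.output p = List.replicate (nthPrime m) false →
      σ.length + p.length = S.C (List.replicate (nthPrime m) false) →
      T = Tsec5 m hm ∧ σ = binRep m ∧ p = [false] := fun _ _ _ hdec hout hlen =>
    (hS.description_length_ge m hm hdec hout).2 (hlen.trans hC)
  refine ⟨hC, hunique, ⟨binRep m, Tsec5 m hm, [false], hS.1 m hm, hout, hC.symm, le_rfl⟩, ?_⟩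
  rintro ⟨σ, T, p, hdec, hout, hlen, hsize⟩
  obtain ⟨rfl, -, -⟩ := hunique σ T p hdec hout hlen
  exact absurd hsize (by simp [Transducer.size, Tsec5]; omega)
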